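/- Let G and H be finite simple graphs with G connected. If the empty bisector graph Ĝ is a complete bipartite graph (its vertex set partitions into two independent sets with every cross pair adjacent), then ξ(G⊙H) = β(Ĝ)·n(H) + α(Ĝ). -/

import Mathlib

universe u v

variable {V : Type u} {W : Type v}

/-- A distance-equalizer set of a graph: for every pair of distinct vertices outside `S`
there is a vertex of `S` equidistant to both. -/
def IsDistEqSet {α : Type*} (G : SimpleGraph α) (S : Set α) : Prop :=
  ∀ ⦃x y : α⦄, x ∉ S → y ∉ S → x ≠ y → ∃ w ∈ S, G.dist w x = G.dist w y

/-- The equidistant dimension of a graph: the minimum cardinality of a distance-equalizer set. -/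
noncomputable def eqdim {α : Type*} (G : SimpleGraph α) : ℕ :=
  sInf {n | ∃ S : Set α, IsDistEqSet G S ∧ S.ncard = n}

/-- The bisector of two vertices: vertices equidistant to both. -/
def bisector {α : Type*} (G : SimpleGraph α) (x y : α) : Set α :=
  {w | G.dist w x = G.dist w y}

/-- The empty bisector graph of `G`: two distinct vertices are adjacent iff their bisector
in `G` is empty. -/
def emptyBisector {α : Type*} (G : SimpleGraph α) : SimpleGraph α where
  Adj x y := x ≠ y ∧ bisector G x y = ∅
  symm := by
    constructor
    rintro x y ⟨h1, h2⟩
    refine ⟨h1.symm, Set.eq_empty_iff_forall_notMem.mpr fun w hw => ?_⟩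
    exact Set.eq_empty_iff_forall_notMem.mp h2 w
      ((show G.dist w y = G.dist w x from hw).symm)
  loopless := ⟨fun _ h => h.1 rfl⟩

/-- A vertex cover of a graph: a set of vertices meeting every edge. -/
def IsVertexCover {α : Type*} (G : SimpleGraph α) (C : Set α) : Prop :=
  ∀ ⦃x y : α⦄, G.Adj x y → x ∈ C ∨ y ∈ C

/-- An independent set of a graph: a set of pairwise non-adjacent vertices. -/
def IsIndepSet {α : Type*} (G : SimpleGraph α) (A : Set α) : Prop :=
  ∀ ⦃x y : α⦄, x ∈ A → y ∈ A → ¬ G.Adj x y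

/-- The vertex cover number `β(G)`. -/
noncomputable def vcNum {α : Type*} (G : SimpleGraph α) : ℕ :=
  sInf {n | ∃ C : Set α, IsVertexCover G C ∧ C.ncard = n}

/-- The independence number `α(G)`. -/
noncomputable def indepNum {α : Type*} (G : SimpleGraph α) : ℕ :=
  sSup {n | ∃ A : Set α, IsIndepSet G A ∧ A.ncard = n}

/-- A forward-equalized pair `(X, Y)` of `G`: `X ∪ Y = V(G)` and for every
`a ∈ X \ Y` and `b ∈ Y \ X` there is `w` with `d(w,a) = d(w,b) + 1`. -/
def IsForwardEqualizedPair {α : Type*} (G : SimpleGraph α) (X Y : Set α) : Prop :=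
  X ∪ Y = Set.univ ∧
  ∀ ⦃a⦄, a ∈ X \ Y → ∀ ⦃b⦄, b ∈ Y \ X → ∃ w, G.dist w a = G.dist w b + 1

/-- `β*(G)`: the minimum of `|X ∩ Y|` over all pairs of vertex covers `X, Y` of the
empty bisector graph of `G` such that `(X, Y)` is a forward-equalized pair of `G`. -/
noncomputable def betaStar {α : Type*} (G : SimpleGraph α) : ℕ :=
  sInf {n | ∃ X Y : Set α,
    IsVertexCover (emptyBisector G) X ∧ IsVertexCover (emptyBisector G) Y ∧
    IsForwardEqualizedPair G X Y ∧ (X ∩ Y).ncard = n}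

/-- The corona product `G ⊙ H`: one copy of `H` for each vertex `i` of `G` (the vertices
`Sum.inr (i, w)`), with `i` joined to every vertex of its copy. -/
def corona (G : SimpleGraph V) (H : SimpleGraph W) : SimpleGraph (V ⊕ V × W) where
  Adj x y :=
    match x, y with
    | Sum.inl a, Sum.inl b => G.Adj a b
    | Sum.inl a, Sum.inr p => a = p.1
    | Sum.inr p, Sum.inl a => a = p.1
    | Sum.inr p, Sum.inr q => p.1 = q.1 ∧ H.Adj p.2 q.2
  symm := by
    constructor
    rintro (a | p) (b | q) h
    · exact h.symm
    · exact h
    · exact h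
    · exact ⟨h.1.symm, h.2.symm⟩
  loopless := by
    constructor
    rintro (a | p) h
    · exact G.loopless.irrefl a h
    · exact H.loopless.irrefl p.2 h.2

/-!
In `G ⊙ H` the distance between vertices lying over `a` and `b` is `d_G(a, b)` plus one for
each endpoint that is a leaf, except for two leaves of the same copy of `H`. So a
distance-equalizer set contains a whole copy of `H` over an endpoint of every edge of `Ĝ` (a
pair with empty bisector), and meets the closed copy over every other vertex; with Gallai's
identity `α + β = n` this gives `ξ(G ⊙ H) ≥ β(Ĝ)·n(H) + α(Ĝ)` for every connected `G`. When `Ĝ`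
is complete bipartite with parts `A`, `B`, the hubs over `A` together with the copies over `B`
equalize all pairs: two vertices of one part have a nonempty bisector, and for `a ∈ A`, `b ∈ B`
the vertex halfway along a geodesic is one step closer to one of them, which is exactly the
offset between a hub and a leaf. Taking `B` to be the smaller part gives the matching upper
bound.
-/

namespace SimpleGraph

variable {α : Type*} {G : SimpleGraph α}

lemma Reachable.le_add_dist_of_adj_le_add_one {f : α → ℕ}
    (hf : ∀ ⦃x y⦄, G.Adj x y → f x ≤ f y + 1) {x y : α} (h : G.Reachable x y) :
    f x ≤ f y + G.dist x y := by
  obtain ⟨p, hp⟩ := h.exists_walk_length_eq_dist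
  rw [← hp]
  clear hp h
  induction p with
  | nil => simp
  | cons hadj _ ih =>
    have := hf hadj
    rw [Walk.length_cons]
    omega

/-- The vertex halfway along a geodesic from `a` to `b`. -/
lemma Reachable.exists_dist_eq_or_eq_add_one {a b : α} (h : G.Reachable a b) :
    ∃ k, G.dist k b = G.dist k a ∨ G.dist k b = G.dist k a + 1 := by
  obtain ⟨p, hp⟩ := h.exists_walk_length_eq_dist
  let k := p.getVert (G.dist a b / 2)
  have hak : G.dist a k ≤ G.dist a b / 2 := (dist_le (p.take _)).trans (by simp)
  have hkb : G.dist k b ≤ G.dist a b - G.dist a b / 2 := (dist_le (p.drop _)).trans (by simp [hp])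
  have htri : G.dist a b ≤ G.dist a k + G.dist k b :=
    (p.drop _).reachable.dist_triangle_right a
  refine ⟨k, ?_⟩
  rw [dist_comm (u := k) (v := a)]
  omega

end SimpleGraph

section EmptyBisector

variable {α : Type*} {G : SimpleGraph α} {a b : α}

lemma emptyBisector_adj_iff :
    (emptyBisector G).Adj a b ↔ a ≠ b ∧ ∀ k, G.dist k a ≠ G.dist k b := by
  simp [emptyBisector, bisector, Set.eq_empty_iff_forall_notMem]

lemma exists_dist_eq_of_not_emptyBisector_adj (hab : a ≠ b)
    (h : ¬ (emptyBisector G).Adj a b) : ∃ k, G.dist k a = G.dist k b := by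
  simpa [emptyBisector_adj_iff, hab] using h

lemma exists_dist_eq_dist_add_one_of_emptyBisector_adj (hG : G.Connected)
    (h : (emptyBisector G).Adj a b) : ∃ k, G.dist k b = G.dist k a + 1 := by
  obtain ⟨k, hk⟩ := (hG a b).exists_dist_eq_or_eq_add_one
  exact ⟨k, hk.resolve_left fun hk' => (emptyBisector_adj_iff.mp h).2 k hk'.symm⟩

end EmptyBisector

section VertexCover

variable {α : Type*} {K : SimpleGraph α}

lemma vcNum_le_ncard {C : Set α} (hC : IsVertexCover K C) : vcNum K ≤ C.ncard :=
  Nat.sInf_le ⟨C, hC, rfl⟩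

lemma exists_isVertexCover_ncard_eq_vcNum : ∃ C, IsVertexCover K C ∧ C.ncard = vcNum K :=
  Nat.sInf_mem (s := {n | ∃ C, IsVertexCover K C ∧ C.ncard = n})
    ⟨_, Set.univ, fun _ _ _ => Or.inl trivial, rfl⟩

lemma isIndepSet_iff_isVertexCover_compl {I : Set α} :
    IsIndepSet K I ↔ IsVertexCover K Iᶜ := by
  refine ⟨fun hI x y hxy => ?_, fun hI x y hx hy hxy => ?_⟩
  · by_contra! h
    exact hI (not_not.mp h.1) (not_not.mp h.2) hxy
  · rcases hI hxy with h | h <;> contradiction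

lemma indepNum_add_vcNum [Finite α] : indepNum K + vcNum K = Nat.card α := by
  obtain ⟨C, hC, hCcard⟩ := exists_isVertexCover_ncard_eq_vcNum (K := K)
  have hcompl (s : Set α) : s.ncard + sᶜ.ncard = Nat.card α := Set.ncard_add_ncard_compl s
  have hbound : ∀ n ∈ {n | ∃ I : Set α, IsIndepSet K I ∧ I.ncard = n},
      n ≤ Nat.card α - vcNum K := by
    rintro _ ⟨I, hI, rfl⟩
    have := vcNum_le_ncard (isIndepSet_iff_isVertexCover_compl.mp hI)
    have := hcompl I
    omega
  have hmem : Nat.card α - vcNum K ∈ {n | ∃ I : Set α, IsIndepSet K I ∧ I.ncard = n} := by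
    refine ⟨Cᶜ, isIndepSet_iff_isVertexCover_compl.mpr (by rwa [compl_compl]), ?_⟩
    have := hcompl C
    omega
  have := le_antisymm (csSup_le ⟨_, hmem⟩ hbound) (le_csSup ⟨_, hbound⟩ hmem)
  have := hcompl C
  unfold indepNum
  omega

end VertexCover

section Eqdim

variable {α : Type*} {G : SimpleGraph α}

lemma eqdim_le_ncard {S : Set α} (hS : IsDistEqSet G S) : eqdim G ≤ S.ncard :=
  Nat.sInf_le ⟨S, hS, rfl⟩

lemma le_eqdim {n : ℕ} (h : ∀ S, IsDistEqSet G S → n ≤ S.ncard) : n ≤ eqdim G := by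
  obtain ⟨S, hS, hcard⟩ := Nat.sInf_mem (s := {n | ∃ S, IsDistEqSet G S ∧ S.ncard = n})
    ⟨_, Set.univ, fun _ _ hx => absurd trivial hx, rfl⟩
  rw [eqdim, ← hcard]
  exact h S hS

end Eqdim

section CompleteBipartite

variable {α : Type*} {K : SimpleGraph α} {A B : Set α}

structure SimpleGraph.IsCompleteBipartiteWith (K : SimpleGraph α) (A B : Set α) : Prop where
  union_eq_univ : A ∪ B = Set.univ
  disjoint : Disjoint A B
  adj_iff : ∀ x y, K.Adj x y ↔ (x ∈ A ∧ y ∈ B) ∨ (x ∈ B ∧ y ∈ A)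

namespace SimpleGraph.IsCompleteBipartiteWith

lemma symm (h : K.IsCompleteBipartiteWith A B) : K.IsCompleteBipartiteWith B A where
  union_eq_univ := Set.union_comm A B ▸ h.union_eq_univ
  disjoint := h.disjoint.symm
  adj_iff x y := (h.adj_iff x y).trans or_comm

lemma mem_right_of_notMem_left (h : K.IsCompleteBipartiteWith A B) {x : α} (hx : x ∉ A) :
    x ∈ B :=
  (h.union_eq_univ ▸ Set.mem_univ x : x ∈ A ∪ B).resolve_left hx

lemma mem_left_of_notMem_right (h : K.IsCompleteBipartiteWith A B) {x : α} (hx : x ∉ B) :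
    x ∈ A :=
  h.symm.mem_right_of_notMem_left hx

lemma isVertexCover_left (h : K.IsCompleteBipartiteWith A B) : IsVertexCover K A := by
  intro x y hxy
  rcases (h.adj_iff x y).mp hxy with ⟨hx, -⟩ | ⟨-, hy⟩
  exacts [Or.inl hx, Or.inr hy]

lemma min_ncard_le_of_isVertexCover [Finite α] (h : K.IsCompleteBipartiteWith A B) {C : Set α}
    (hC : IsVertexCover K C) : min A.ncard B.ncard ≤ C.ncard := by
  by_cases hA : A ⊆ C
  · exact (min_le_left _ _).trans (Set.ncard_le_ncard hA)
  obtain ⟨a, haA, haC⟩ := Set.not_subset.mp hA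
  refine (min_le_right _ _).trans (Set.ncard_le_ncard fun b hbB => ?_)
  exact (hC ((h.adj_iff a b).mpr (Or.inl ⟨haA, hbB⟩))).resolve_left haC

lemma vcNum_eq [Finite α] (h : K.IsCompleteBipartiteWith A B) :
    vcNum K = min A.ncard B.ncard := by
  obtain ⟨C, hC, hcard⟩ := exists_isVertexCover_ncard_eq_vcNum (K := K)
  refine le_antisymm ?_ (hcard ▸ h.min_ncard_le_of_isVertexCover hC)
  rcases min_choice A.ncard B.ncard with hmin | hmin <;> rw [hmin]
  exacts [vcNum_le_ncard h.isVertexCover_left, vcNum_le_ncard h.symm.isVertexCover_left]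

lemma ncard_add_ncard [Finite α] (h : K.IsCompleteBipartiteWith A B) :
    A.ncard + B.ncard = Nat.card α := by
  rw [← Set.ncard_union_eq h.disjoint, h.union_eq_univ, Set.ncard_univ]

end SimpleGraph.IsCompleteBipartiteWith

end CompleteBipartite

section Corona

variable {G : SimpleGraph V} {H : SimpleGraph W}

def coronaProj : V ⊕ V × W → V := Sum.elim id Prod.fst

def coronaDepth : V ⊕ V × W → ℕ := Sum.elim (fun _ => 0) (fun _ => 1)

@[simp] lemma coronaProj_inl (a : V) : coronaProj (Sum.inl a : V ⊕ V × W) = a := rfl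
@[simp] lemma coronaProj_inr (p : V × W) : coronaProj (Sum.inr p : V ⊕ V × W) = p.1 := rfl
@[simp] lemma coronaDepth_inl (a : V) : coronaDepth (Sum.inl a : V ⊕ V × W) = 0 := rfl
@[simp] lemma coronaDepth_inr (p : V × W) : coronaDepth (Sum.inr p : V ⊕ V × W) = 1 := rfl

variable (G H) in
def coronaHub : G →g corona G H where
  toFun := Sum.inl
  map_rel' h := h

lemma corona_reachable_inl_coronaProj (x : V ⊕ V × W) :
    (corona G H).Reachable (Sum.inl (coronaProj x)) x := by
  rcases x with a | p
  exacts [.rfl, SimpleGraph.Adj.reachable rfl]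

lemma corona_connected (hG : G.Connected) : (corona G H).Connected := by
  have := hG.nonempty
  refine ⟨fun x y => ?_⟩
  exact (corona_reachable_inl_coronaProj x).symm.trans
    (((hG _ _).map (coronaHub G H)).trans (corona_reachable_inl_coronaProj y))

lemma corona_dist_inl_inl_le (hG : G.Connected) (a b : V) :
    (corona G H).dist (Sum.inl a) (Sum.inl b) ≤ G.dist a b := by
  obtain ⟨p, hp⟩ := hG.exists_walk_length_eq_dist a b
  have := SimpleGraph.dist_le (p.map (coronaHub G H))
  rwa [SimpleGraph.Walk.length_map, hp] at this

lemma corona_dist_inl_coronaProj_le (x : V ⊕ V × W) :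
    (corona G H).dist (Sum.inl (coronaProj x)) x ≤ coronaDepth x := by
  rcases x with a | p
  · simp
  · exact (SimpleGraph.dist_eq_one_iff_adj.mpr rfl).le

lemma corona_dist_le (hG : G.Connected) (x y : V ⊕ V × W) :
    (corona G H).dist x y ≤
      G.dist (coronaProj x) (coronaProj y) + coronaDepth x + coronaDepth y := by
  have hc := corona_connected (H := H) hG
  calc (corona G H).dist x y
      ≤ (corona G H).dist x (Sum.inl (coronaProj x)) +
          (corona G H).dist (Sum.inl (coronaProj x)) (Sum.inl (coronaProj y)) +
          (corona G H).dist (Sum.inl (coronaProj y)) y :=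
        hc.dist_triangle.trans (add_le_add_left hc.dist_triangle _)
    _ ≤ _ := by
      rw [SimpleGraph.dist_comm (u := x)]
      have := corona_dist_inl_coronaProj_le (G := G) (H := H) x
      have := corona_dist_inl_coronaProj_le (G := G) (H := H) y
      have := corona_dist_inl_inl_le (H := H) hG (coronaProj x) (coronaProj y)
      omega

variable (G) in
/-- The distance to a leaf of the copy of `H` at `b`, except that on the leaves of that copy it
is `0` rather than `1` or `2`. -/
noncomputable def coronaPotential (b : V) : V ⊕ V × W → ℕ
  | Sum.inl a => G.dist a b + 1
  | Sum.inr p => open Classical in if p.1 = b then 0 else G.dist p.1 b + 2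

lemma coronaPotential_le_add_one (hG : G.Connected) (b : V) ⦃x y : V ⊕ V × W⦄
    (h : (corona G H).Adj x y) : coronaPotential G b x ≤ coronaPotential G b y + 1 := by
  rcases x with a | ⟨a, u⟩ <;> rcases y with c | ⟨c, w⟩ <;> simp only [coronaPotential]
  · have h1 : G.dist a c = 1 := SimpleGraph.dist_eq_one_iff_adj.mpr h
    have := hG.dist_triangle (u := a) (v := c) (w := b)
    omega
  · obtain rfl : a = c := h
    split_ifs with hab
    · subst hab; simp
    · omega
  · obtain rfl : c = a := h
    split_ifs <;> omega
  · obtain ⟨rfl, -⟩ : a = c ∧ _ := h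
    split_ifs <;> omega

lemma le_corona_dist (hG : G.Connected) {x y : V ⊕ V × W}
    (h : x.isLeft ∨ coronaProj x ≠ coronaProj y) :
    G.dist (coronaProj x) (coronaProj y) + coronaDepth x + coronaDepth y ≤
      (corona G H).dist x y := by
  have key := ((corona_connected (H := H) hG).preconnected x y).le_add_dist_of_adj_le_add_one
    (coronaPotential_le_add_one hG (coronaProj y))
  rcases x with a | ⟨a, u⟩ <;> rcases y with c | ⟨c, w⟩ <;>
    simp_all [coronaPotential] <;> omega

lemma corona_dist_eq (hG : G.Connected) {x y : V ⊕ V × W}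
    (h : x.isLeft ∨ y.isLeft ∨ coronaProj x ≠ coronaProj y) :
    (corona G H).dist x y =
      G.dist (coronaProj x) (coronaProj y) + coronaDepth x + coronaDepth y := by
  refine (corona_dist_le hG x y).antisymm ?_
  rcases h with h | h | h
  · exact le_corona_dist hG (.inl h)
  · have := le_corona_dist (H := H) hG (x := y) (y := x) (.inl h)
    rw [SimpleGraph.dist_comm (G := corona G H), SimpleGraph.dist_comm (G := G)]
    omega
  · exact le_corona_dist hG (.inr h)

end Corona

section LowerBound

variable {G : SimpleGraph V} {H : SimpleGraph W} {S : Set (V ⊕ V × W)}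

lemma corona_dist_inr_lt (hG : G.Connected) {a b : V} (hab : a ≠ b) (u v w : W) :
    (corona G H).dist (Sum.inr (a, v)) (Sum.inr (a, u)) <
      (corona G H).dist (Sum.inr (a, v)) (Sum.inr (b, w)) := by
  have := corona_dist_le (H := H) hG (Sum.inr (a, v)) (Sum.inr (a, u))
  have := hG.pos_dist_of_ne hab
  rw [corona_dist_eq (x := Sum.inr (a, v)) (y := Sum.inr (b, w)) hG (.inr (.inr hab))]
  simp_all only [coronaProj_inr, coronaDepth_inr, SimpleGraph.dist_self]
  omega

lemma isVertexCover_emptyBisector_of_isDistEqSet_corona (hG : G.Connected)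
    (hS : IsDistEqSet (corona G H) S) :
    IsVertexCover (emptyBisector G) {i | ∀ w, Sum.inr (i, w) ∈ S} := by
  intro a b hab
  by_contra! hout
  simp only [Set.mem_ofPred_eq, not_forall] at hout
  obtain ⟨⟨u, hu⟩, ⟨w, hw⟩⟩ := hout
  obtain ⟨hne, hbis⟩ := emptyBisector_adj_iff.mp hab
  obtain ⟨s, -, hs⟩ := hS hu hw (by simp [hne])
  rcases s with c | ⟨c, v⟩
  · rw [corona_dist_eq hG (.inl rfl), corona_dist_eq hG (.inl rfl)] at hs
    exact hbis c (by simpa using hs)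
  by_cases hca : c = a
  · subst hca
    exact (corona_dist_inr_lt hG hne u v w).ne hs
  by_cases hcb : c = b
  · subst hcb
    exact (corona_dist_inr_lt hG (Ne.symm hne) w v u).ne hs.symm
  rw [corona_dist_eq (x := Sum.inr (c, v)) (y := Sum.inr (a, u)) hG (.inr (.inr hca)),
    corona_dist_eq (x := Sum.inr (c, v)) (y := Sum.inr (b, w)) hG (.inr (.inr hcb))] at hs
  exact hbis c (by simpa using hs)

lemma exists_mem_coronaProj_eq_of_isDistEqSet_corona (hG : G.Connected)
    (hS : IsDistEqSet (corona G H) S) {i : V} {w : W} (hw : Sum.inr (i, w) ∉ S) :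
    ∃ s ∈ S, coronaProj s = i := by
  by_cases hi : Sum.inl i ∈ S
  · exact ⟨_, hi, rfl⟩
  obtain ⟨s, hsS, hs⟩ := hS hi hw Sum.inl_ne_inr
  refine ⟨s, hsS, by_contra fun hsi => ?_⟩
  rw [corona_dist_eq hG (.inr (.inl rfl)), corona_dist_eq hG (.inr (.inr hsi))] at hs
  simp at hs

lemma ncard_mul_add_ncard_compl_le [Finite V] [Fintype W] {C : Set V}
    (hC : ∀ i ∈ C, ∀ w, Sum.inr (i, w) ∈ S) (hfib : ∀ i, ∃ s ∈ S, coronaProj s = i) :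
    C.ncard * Fintype.card W + Cᶜ.ncard ≤ S.ncard := by
  choose g hgS hg using hfib
  have hg_inj : g.Injective := Function.LeftInverse.injective hg
  have hdisj : Disjoint (Sum.inr '' (C ×ˢ Set.univ) : Set (V ⊕ V × W)) (g '' Cᶜ) := by
    refine Set.disjoint_left.mpr ?_
    rintro _ ⟨⟨i, w⟩, ⟨hi, -⟩, rfl⟩ ⟨j, hj, hgj⟩
    have hji : j = i := by rw [← hg j, hgj]; rfl
    exact hj (hji ▸ hi)
  calc C.ncard * Fintype.card W + Cᶜ.ncard
      = (Sum.inr '' (C ×ˢ Set.univ) ∪ g '' Cᶜ : Set (V ⊕ V × W)).ncard := by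
        rw [Set.ncard_union_eq hdisj, Set.ncard_image_of_injective _ Sum.inr_injective,
          Set.ncard_image_of_injective _ hg_inj, Set.ncard_prod, Set.ncard_univ,
          Nat.card_eq_fintype_card]
    _ ≤ S.ncard := by
        refine Set.ncard_le_ncard (Set.union_subset ?_ ?_)
        · rintro _ ⟨⟨i, w⟩, ⟨hi, -⟩, rfl⟩
          exact hC i hi w
        · rintro _ ⟨i, -, rfl⟩
          exact hgS i

theorem vcNum_mul_add_indepNum_le_eqdim_corona [Finite V] [Fintype W] [Nonempty W]
    (hG : G.Connected) :
    vcNum (emptyBisector G) * Fintype.card W + indepNum (emptyBisector G) ≤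
      eqdim (corona G H) := by
  refine le_eqdim fun S hS => ?_
  set C : Set V := {i | ∀ w, Sum.inr (i, w) ∈ S}
  have hfib : ∀ i, ∃ s ∈ S, coronaProj s = i := by
    intro i
    by_cases hi : i ∈ C
    · exact ⟨_, hi (Classical.arbitrary W), rfl⟩
    · obtain ⟨w, hw⟩ := not_forall.mp hi
      exact exists_mem_coronaProj_eq_of_isDistEqSet_corona hG hS hw
  have hS_card := ncard_mul_add_ncard_compl_le (C := C) (fun _ hi => hi) hfib
  have hβ := vcNum_le_ncard (isVertexCover_emptyBisector_of_isDistEqSet_corona hG hS)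
  have hαβ := indepNum_add_vcNum (K := emptyBisector G)
  have hC := Set.ncard_add_ncard_compl C
  have hW : 0 < Fintype.card W := Fintype.card_pos
  nlinarith

end LowerBound

section UpperBound

variable {G : SimpleGraph V} {H : SimpleGraph W} {A B : Set V}

def coronaHubsAndLeaves (A B : Set V) : Set (V ⊕ V × W) :=
  Sum.inl '' A ∪ Sum.inr '' (B ×ˢ Set.univ)

@[simp] lemma inl_mem_coronaHubsAndLeaves {a : V} :
    (Sum.inl a : V ⊕ V × W) ∈ coronaHubsAndLeaves A B ↔ a ∈ A := by
  simp [coronaHubsAndLeaves]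

@[simp] lemma inr_mem_coronaHubsAndLeaves {p : V × W} :
    (Sum.inr p : V ⊕ V × W) ∈ coronaHubsAndLeaves A B ↔ p.1 ∈ B := by
  simp [coronaHubsAndLeaves]

lemma ncard_coronaHubsAndLeaves [Finite V] [Fintype W] :
    (coronaHubsAndLeaves A B : Set (V ⊕ V × W)).ncard = B.ncard * Fintype.card W + A.ncard := by
  rw [coronaHubsAndLeaves, Set.ncard_union_eq, Set.ncard_image_of_injective _ Sum.inl_injective,
    Set.ncard_image_of_injective _ Sum.inr_injective, Set.ncard_prod, Set.ncard_univ,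
    Nat.card_eq_fintype_card, add_comm]
  exact Set.disjoint_left.mpr fun _ ⟨_, _, ha⟩ ⟨_, _, hp⟩ =>
    Sum.inl_ne_inr (ha.trans hp.symm)

lemma exists_mem_coronaHubsAndLeaves_coronaProj_eq [Nonempty W] (hAB : A ∪ B = Set.univ)
    (k : V) : ∃ s ∈ (coronaHubsAndLeaves A B : Set (V ⊕ V × W)), coronaProj s = k := by
  rcases (hAB ▸ Set.mem_univ k : k ∈ A ∪ B) with hk | hk
  exacts [⟨Sum.inl k, by simpa using hk, rfl⟩,
    ⟨Sum.inr (k, Classical.arbitrary W), by simpa using hk, rfl⟩]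

/-- A leaf of `coronaHubsAndLeaves A B` lies over `B` and a leaf outside it does not, so the two
never lie in the same copy of `H`. -/
lemma corona_dist_eq_of_mem_coronaHubsAndLeaves_of_notMem (hG : G.Connected)
    {s x : V ⊕ V × W} (hs : s ∈ coronaHubsAndLeaves A B) (hx : x ∉ coronaHubsAndLeaves A B) :
    (corona G H).dist s x =
      G.dist (coronaProj s) (coronaProj x) + coronaDepth s + coronaDepth x := by
  refine corona_dist_eq hG ?_
  rcases s with a | ⟨a, u⟩ <;> rcases x with b | ⟨b, w⟩
  · exact .inl rfl
  · exact .inl rfl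
  · exact .inr (.inl rfl)
  · simp only [inr_mem_coronaHubsAndLeaves] at hs hx
    exact .inr (.inr fun (hab : a = b) => hx (hab ▸ hs))

lemma exists_dist_add_coronaDepth_eq (hG : G.Connected)
    (h : (emptyBisector G).IsCompleteBipartiteWith A B) {x y : V ⊕ V × W}
    (hx : x ∉ coronaHubsAndLeaves A B) (hy : y ∉ coronaHubsAndLeaves A B) (hxy : x ≠ y) :
    ∃ k, G.dist k (coronaProj x) + coronaDepth x = G.dist k (coronaProj y) + coronaDepth y := by
  rcases x with i | ⟨i, u⟩ <;> rcases y with j | ⟨j, w⟩ <;>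
    simp only [inl_mem_coronaHubsAndLeaves, inr_mem_coronaHubsAndLeaves] at hx hy <;>
    simp only [coronaProj_inl, coronaProj_inr, coronaDepth_inl, coronaDepth_inr, add_zero,
      add_left_inj]
  · have hij : i ≠ j := fun hij => hxy (hij ▸ rfl)
    refine exists_dist_eq_of_not_emptyBisector_adj hij fun hadj => ?_
    rcases (h.adj_iff i j).mp hadj with ⟨hi, -⟩ | ⟨-, hj⟩
    exacts [hx hi, hy hj]
  · obtain ⟨k, hk⟩ := exists_dist_eq_dist_add_one_of_emptyBisector_adj hG
      ((h.adj_iff j i).mpr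
        (.inl ⟨h.mem_left_of_notMem_right hy, h.mem_right_of_notMem_left hx⟩))
    exact ⟨k, hk⟩
  · obtain ⟨k, hk⟩ := exists_dist_eq_dist_add_one_of_emptyBisector_adj hG
      ((h.adj_iff i j).mpr
        (.inl ⟨h.mem_left_of_notMem_right hx, h.mem_right_of_notMem_left hy⟩))
    exact ⟨k, hk.symm⟩
  · by_cases hij : i = j
    · exact ⟨i, by rw [hij]⟩
    refine exists_dist_eq_of_not_emptyBisector_adj hij fun hadj => ?_
    rcases (h.adj_iff i j).mp hadj with ⟨-, hj⟩ | ⟨hi, -⟩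
    exacts [hy hj, hx hi]

lemma isDistEqSet_coronaHubsAndLeaves [Nonempty W] (hG : G.Connected)
    (h : (emptyBisector G).IsCompleteBipartiteWith A B) :
    IsDistEqSet (corona G H) (coronaHubsAndLeaves A B) := by
  intro x y hx hy hxy
  obtain ⟨k, hk⟩ := exists_dist_add_coronaDepth_eq hG h hx hy hxy
  obtain ⟨s, hs, rfl⟩ := exists_mem_coronaHubsAndLeaves_coronaProj_eq (W := W) h.union_eq_univ k
  refine ⟨s, hs, ?_⟩
  rw [corona_dist_eq_of_mem_coronaHubsAndLeaves_of_notMem hG hs hx,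
    corona_dist_eq_of_mem_coronaHubsAndLeaves_of_notMem hG hs hy]
  omega

lemma eqdim_corona_le [Finite V] [Fintype W] [Nonempty W] (hG : G.Connected)
    (h : (emptyBisector G).IsCompleteBipartiteWith A B) :
    eqdim (corona G H) ≤ B.ncard * Fintype.card W + A.ncard :=
  ncard_coronaHubsAndLeaves (W := W) (A := A) (B := B) ▸
    eqdim_le_ncard (isDistEqSet_coronaHubsAndLeaves hG h)

end UpperBound

/-- If the empty bisector graph `Ĝ` is complete bipartite (its vertex set
splits into two disjoint sets covering it, with adjacency exactly between the two parts),
then `ξ(G ⊙ H) = β(Ĝ)·n(H) + α(Ĝ)`. -/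
theorem eqdim_corona_of_emptyBisector_completeBipartite [Fintype V] [Fintype W] [Nonempty W]
    (G : SimpleGraph V) (H : SimpleGraph W) (hG : G.Connected)
    (A B : Set V) (hUnion : A ∪ B = Set.univ) (hDisj : Disjoint A B)
    (hAdj : ∀ x y : V, (emptyBisector G).Adj x y ↔
      ((x ∈ A ∧ y ∈ B) ∨ (x ∈ B ∧ y ∈ A))) :
    eqdim (corona G H) =
      vcNum (emptyBisector G) * Fintype.card W + indepNum (emptyBisector G) := by
  have h : (emptyBisector G).IsCompleteBipartiteWith A B := ⟨hUnion, hDisj, hAdj⟩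
  refine le_antisymm ?_ (vcNum_mul_add_indepNum_le_eqdim_corona hG)
  have hAB := eqdim_corona_le (H := H) hG h
  have hBA := eqdim_corona_le (H := H) hG h.symm
  have hαβ := indepNum_add_vcNum (K := emptyBisector G)
  have hcard := h.ncard_add_ncard
  rcases min_choice A.ncard B.ncard with hmin | hmin <;>
    rw [h.vcNum_eq, hmin] at hαβ ⊢ <;> omega
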